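/- arXiv:1805.07871 — 2 statements merged into one kernel-verified Lean document; each statement's English description precedes it below -/
import Mathlib

section
/- Let 𝕏 be a nonempty finite set, K a positive integer, and f₁,…,f_K : 𝕏 → ℝ feature functions. Let D₁ = (x₁,…,x_m) and D₂ = (x_{m+1},…,x_{m+n}) be two nonempty blocks of observations in 𝕏 (accumulated data and new-session data), and let D = D₁⌢D₂ be their concatenation. Suppose θⁱ, θ^{i−1} ∈ ℝ^K satisfy LL(θⁱ | D) ≥ LL(θ^{i−1} | D) (e.g. θⁱ maximizes the likelihood of the combined data). Then LL(θⁱ | D) − LL(θ^{i−1} | D₁) ≥ (n/(m+n))·(LL(θ^{i−1} | D₂) − LL(θ^{i−1} | D₁)). In particular, the change in demonstration log-likelihood across a session is bounded below by a term whose magnitude is proportional to n/(m+n) and hence vanishes when m ≫ n. (This is a precise form of the paper's Lemma 1, monotonicity of incremental maximum-entropy IRL.) -/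
open Finset

/-- Partition function `Z(θ) = ∑_x exp(∑_k θ_k f_k(x))`. -/
noncomputable def partitionZ {X : Type*} [Fintype X] {K : ℕ}
    (f : Fin K → X → ℝ) (θ : Fin K → ℝ) : ℝ :=
  ∑ x : X, Real.exp (∑ k, θ k * f k x)

/-- Gibbs (maximum-entropy) distribution `p_θ(x) = exp(∑_k θ_k f_k(x)) / Z(θ)`. -/
noncomputable def gibbs {X : Type*} [Fintype X] {K : ℕ}
    (f : Fin K → X → ℝ) (θ : Fin K → ℝ) (x : X) : ℝ :=
  Real.exp (∑ k, θ k * f k x) / partitionZ f θ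

/-- Average log-likelihood `LL(θ | x₁,…,x_n) = (1/n) ∑_j log p_θ(x_j)`. -/
noncomputable def LL {X : Type*} [Fintype X] {K : ℕ}
    (f : Fin K → X → ℝ) (θ : Fin K → ℝ) {n : ℕ} (xs : Fin n → X) : ℝ :=
  (1 / (n : ℝ)) * ∑ j, Real.log (gibbs f θ (xs j))

lemma LL_append {X : Type*} [Fintype X] {K : ℕ}
    (f : Fin K → X → ℝ) (θ : Fin K → ℝ) {m n : ℕ} (hm : 0 < m) (hn : 0 < n)
    (D₁ : Fin m → X) (D₂ : Fin n → X) :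
    LL f θ (Fin.append D₁ D₂) =
      ((m : ℝ) / ((m : ℝ) + (n : ℝ))) * LL f θ D₁ +
      ((n : ℝ) / ((m : ℝ) + (n : ℝ))) * LL f θ D₂ := by
  have hm' : (m : ℝ) ≠ 0 := Nat.cast_ne_zero.2 hm.ne'
  have hn' : (n : ℝ) ≠ 0 := Nat.cast_ne_zero.2 hn.ne'
  have hmn : (m : ℝ) + (n : ℝ) ≠ 0 := by positivity
  unfold LL
  rw [Fin.sum_univ_add]
  simp only [Fin.append_left, Fin.append_right, Nat.cast_add]
  field_simp

/-- Monotonicity of incremental max-entropy IRL (paper's Lemma 1, precise form):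
if `θⁱ` does at least as well as `θ^{i−1}` on the combined data `D = D₁ ⌢ D₂`,
then `LL(θⁱ|D) − LL(θ^{i−1}|D₁) ≥ (n/(m+n))·(LL(θ^{i−1}|D₂) − LL(θ^{i−1}|D₁))`,
a lower bound vanishing when `m ≫ n`. -/
theorem incremental_LL_monotonicity
    {X : Type*} [Fintype X] [Nonempty X] {K : ℕ} (hK : 0 < K)
    (f : Fin K → X → ℝ)
    {m n : ℕ} (hm : 0 < m) (hn : 0 < n)
    (D₁ : Fin m → X) (D₂ : Fin n → X)
    (θi θprev : Fin K → ℝ)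
    (hopt : LL f θi (Fin.append D₁ D₂) ≥ LL f θprev (Fin.append D₁ D₂)) :
    LL f θi (Fin.append D₁ D₂) - LL f θprev D₁ ≥
      ((n : ℝ) / ((m : ℝ) + (n : ℝ))) * (LL f θprev D₂ - LL f θprev D₁) := by
  have h := LL_append f θprev hm hn D₁ D₂
  have hm' : (m : ℝ) ≠ 0 := Nat.cast_ne_zero.2 hm.ne'
  have hn' : (n : ℝ) ≠ 0 := Nat.cast_ne_zero.2 hn.ne'
  have hmn : (m : ℝ) + (n : ℝ) ≠ 0 := by positivity
  have key : LL f θprev (Fin.append D₁ D₂) - LL f θprev D₁ =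
      ((n : ℝ) / ((m : ℝ) + (n : ℝ))) * (LL f θprev D₂ - LL f θprev D₁) := by
    rw [h]; field_simp; ring
  linarith [hopt, key]
end

section
/- Let 𝕏 be a nonempty finite set, K a positive integer, and f₁,…,f_K : 𝕏 → ℝ feature functions. For all θ, θ' ∈ ℝ^K and all observations x₁,…,x_n ∈ 𝕏 (n ≥ 1), the difference of average log-likelihoods satisfies LL(θ | x₁,…,x_n) − LL(θ' | x₁,…,x_n) ≤ Σ_{k=1}^K (θ_k − θ'_k) · (φ̂_k − E_{p_{θ'}}[f_k]), where φ̂_k = (1/n) Σ_{j=1}^n f_k(x_j). In particular, if θ, θ' ∈ [0,1]^K and |φ̂_k − E_{p_{θ'}}[f_k]| ≤ ε/(2K) for all k, then LL(θ | x₁,…,x_n) − LL(θ' | x₁,…,x_n) ≤ ε/2. -/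
open Finset

/-- Model feature expectation `E_{p_θ}[f_k] = ∑_x p_θ(x) f_k(x)`. -/
noncomputable def featExp {X : Type*} [Fintype X] {K : ℕ}
    (f : Fin K → X → ℝ) (θ : Fin K → ℝ) (k : Fin K) : ℝ :=
  ∑ x : X, gibbs f θ x * f k x

/-- Empirical feature expectation `φ̂_k = (1/n) ∑_j f_k(x_j)`. -/
noncomputable def empFeat {X : Type*} [Fintype X] {K : ℕ}
    (f : Fin K → X → ℝ) {n : ℕ} (xs : Fin n → X) (k : Fin K) : ℝ :=
  (1 / (n : ℝ)) * ∑ j, f k (xs j)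

lemma partitionZ_pos {X : Type*} [Fintype X] [Nonempty X] {K : ℕ}
    (f : Fin K → X → ℝ) (θ : Fin K → ℝ) : 0 < partitionZ f θ :=
  Finset.sum_pos (fun x _ => Real.exp_pos _) univ_nonempty

lemma logZ_sub_ge {X : Type*} [Fintype X] [Nonempty X] {K : ℕ}
    (f : Fin K → X → ℝ) (θ θ' : Fin K → ℝ) :
    ∑ k, (θ k - θ' k) * featExp f θ' k ≤
      Real.log (partitionZ f θ) - Real.log (partitionZ f θ') := by
  have hZ := partitionZ_pos f θ
  have hZ' := partitionZ_pos f θ'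
  set g : X → ℝ := fun x => ∑ k, (θ k - θ' k) * f k x with hg
  set w : X → ℝ := fun x => gibbs f θ' x with hw
  have hw0 : ∀ x ∈ univ, (0:ℝ) ≤ w x := fun x _ =>
    div_nonneg (Real.exp_pos _).le hZ'.le
  have hw1 : ∑ x : X, w x = 1 := by
    simp only [hw, gibbs, ← Finset.sum_div, partitionZ]
    field_simp
  have hjen := convexOn_exp.map_sum_le hw0 hw1 (fun x _ => Set.mem_univ (g x))
  simp only [smul_eq_mul] at hjen
  -- ∑ w x * exp (g x) = Z θ / Z θ'
  have hsum : ∑ x : X, w x * Real.exp (g x) = partitionZ f θ / partitionZ f θ' := by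
    rw [eq_div_iff hZ'.ne', Finset.sum_mul]
    refine Finset.sum_congr rfl fun x _ => ?_
    simp only [hw, gibbs, hg]
    rw [div_mul_eq_mul_div, div_mul_cancel₀ _ hZ'.ne', ← Real.exp_add]
    congr 1
    rw [← Finset.sum_add_distrib]
    exact Finset.sum_congr rfl fun k _ => by ring
  have key : Real.exp (∑ x : X, w x * g x) ≤ partitionZ f θ / partitionZ f θ' := by
    rw [← hsum]; exact hjen
  have hlog : ∑ x : X, w x * g x ≤ Real.log (partitionZ f θ / partitionZ f θ') := by
    have := Real.log_le_log (Real.exp_pos _) key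
    rwa [Real.log_exp] at this
  rw [Real.log_div hZ.ne' hZ'.ne'] at hlog
  refine le_trans (le_of_eq ?_) hlog
  simp only [featExp, hw, hg, Finset.mul_sum]
  rw [Finset.sum_comm]
  exact Finset.sum_congr rfl fun x _ => Finset.sum_congr rfl fun k _ => by ring


/-- The difference of average log-likelihoods satisfies
`LL(θ|·) − LL(θ'|·) ≤ ∑_k (θ_k − θ'_k)(φ̂_k − E_{p_{θ'}}[f_k])`; in particular,
for weights in `[0,1]^K` with `|φ̂_k − E_{p_{θ'}}[f_k]| ≤ ε/(2K)` for all `k`,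
the difference is at most `ε/2`. -/
theorem LL_diff_le_dot_featGap
    {X : Type*} [Fintype X] [Nonempty X] {K : ℕ} (hK : 0 < K)
    (f : Fin K → X → ℝ) (θ θ' : Fin K → ℝ)
    {n : ℕ} (hn : 0 < n) (xs : Fin n → X) :
    (LL f θ xs - LL f θ' xs ≤
        ∑ k, (θ k - θ' k) * (empFeat f xs k - featExp f θ' k)) ∧
    (∀ ε : ℝ, (∀ k, θ k ∈ Set.Icc (0:ℝ) 1) → (∀ k, θ' k ∈ Set.Icc (0:ℝ) 1) →
      (∀ k, |empFeat f xs k - featExp f θ' k| ≤ ε / (2 * (K : ℝ))) →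
      LL f θ xs - LL f θ' xs ≤ ε / 2) := by
  have hZ := partitionZ_pos f θ
  have hZ' := partitionZ_pos f θ'
  have hnR : (0:ℝ) < n := Nat.cast_pos.mpr hn
  -- LL difference formula
  have hLL : LL f θ xs - LL f θ' xs =
      (∑ k, (θ k - θ' k) * empFeat f xs k)
        - (Real.log (partitionZ f θ) - Real.log (partitionZ f θ')) := by
    simp only [LL, gibbs, empFeat]
    rw [← mul_sub, ← Finset.sum_sub_distrib]
    have : ∀ j : Fin n,
        Real.log (Real.exp (∑ k, θ k * f k (xs j)) / partitionZ f θ)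
        - Real.log (Real.exp (∑ k, θ' k * f k (xs j)) / partitionZ f θ')
        = (∑ k, (θ k - θ' k) * f k (xs j))
          - (Real.log (partitionZ f θ) - Real.log (partitionZ f θ')) := by
      intro j
      rw [Real.log_div (Real.exp_pos _).ne' hZ.ne',
          Real.log_div (Real.exp_pos _).ne' hZ'.ne', Real.log_exp, Real.log_exp,
          ]
      have hsub : ∑ k, (θ k - θ' k) * f k (xs j)
          = ∑ k, θ k * f k (xs j) - ∑ k, θ' k * f k (xs j) := by
        rw [← Finset.sum_sub_distrib]; exact Finset.sum_congr rfl fun k _ => by ring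
      rw [hsub]; ring
    rw [Finset.sum_congr rfl fun j _ => this j, Finset.sum_sub_distrib,
        Finset.sum_const, Finset.card_univ, Fintype.card_fin, mul_sub,
        nsmul_eq_mul, ← mul_assoc, one_div, inv_mul_cancel₀ hnR.ne', one_mul]
    congr 1
    simp only [empFeat, Finset.mul_sum]
    rw [Finset.sum_comm]
    exact Finset.sum_congr rfl fun k _ => Finset.sum_congr rfl fun j _ => by ring
  have h1 : LL f θ xs - LL f θ' xs ≤
      ∑ k, (θ k - θ' k) * (empFeat f xs k - featExp f θ' k) := by
    rw [hLL]
    have := logZ_sub_ge f θ θ'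
    have heq : ∑ k, (θ k - θ' k) * (empFeat f xs k - featExp f θ' k)
        = (∑ k, (θ k - θ' k) * empFeat f xs k)
          - ∑ k, (θ k - θ' k) * featExp f θ' k := by
      rw [← Finset.sum_sub_distrib]; exact Finset.sum_congr rfl fun k _ => by ring
    rw [heq]; linarith
  refine ⟨h1, fun ε hθ hθ' hgap => ?_⟩
  refine h1.trans ?_
  have hKR : (0:ℝ) < K := Nat.cast_pos.mpr hK
  calc ∑ k, (θ k - θ' k) * (empFeat f xs k - featExp f θ' k)
      ≤ ∑ k : Fin K, ε / (2 * (K:ℝ)) := by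
        refine Finset.sum_le_sum fun k _ => ?_
        calc (θ k - θ' k) * (empFeat f xs k - featExp f θ' k)
            ≤ |(θ k - θ' k) * (empFeat f xs k - featExp f θ' k)| := le_abs_self _
          _ = |θ k - θ' k| * |empFeat f xs k - featExp f θ' k| := abs_mul _ _
          _ ≤ 1 * (ε / (2 * (K:ℝ))) := by
              refine mul_le_mul ?_ (hgap k) (abs_nonneg _) zero_le_one
              rw [abs_le]
              obtain ⟨h1, h2⟩ := hθ k; obtain ⟨h3, h4⟩ := hθ' k
              constructor <;> linarith
          _ = ε / (2 * (K:ℝ)) := one_mul _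
    _ = ε / 2 := by
        rw [Finset.sum_const, Finset.card_univ, Fintype.card_fin, nsmul_eq_mul]
        field_simp
end
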